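/- Let n ≥ 1, let Δ : ℝⁿ → [0,∞) be continuous, homogeneous of degree m with 0 < m ≤ 2n, and nonvanishing outside a Lebesgue-null set. Let ω ⊂ ℝⁿ be a bounded convex open set containing 0 and set ω′ = ω \ ((1/2)·ω). Then for every real s with 0 < s < 1/2: ∫_{ω} Δ(x)^{s−1/2} dx ≤ (2^{2ns}/(2^{2ns} − 1)) · ∫_{ω′} Δ(x)^{s−1/2} dx (an inequality in [0,∞]). -/

import Mathlib

open scoped Pointwise

open MeasureTheory

/-- For `Δ` continuous, nonnegative, homogeneous of degree `m` with `0 < m ≤ 2n` and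
nonvanishing outside a null set, `ω` bounded convex open containing `0`,
`ω′ = ω \ (1/2)·ω`, and `0 < s < 1/2`:
`∫_ω Δ^{s−1/2} ≤ (2^{2ns}/(2^{2ns}−1)) ∫_{ω′} Δ^{s−1/2}` in `[0,∞]`,
with the integrand extended by `+∞` where `Δ = 0`. -/
theorem stmt14 (n : ℕ) (hn : 1 ≤ n) (m : ℝ) (hm : 0 < m) (hm2 : m ≤ 2 * n)
    (Δ : (Fin n → ℝ) → ℝ) (hcont : Continuous Δ) (hnonneg : ∀ x, 0 ≤ Δ x)
    (hhom : ∀ t : ℝ, 0 < t → ∀ x, Δ (t • x) = t ^ m * Δ x)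
    (hnull : volume {x : Fin n → ℝ | Δ x = 0} = 0)
    (ω : Set (Fin n → ℝ)) (hb : Bornology.IsBounded ω) (hconv : Convex ℝ ω)
    (hopen : IsOpen ω) (h0 : (0 : Fin n → ℝ) ∈ ω)
    (s : ℝ) (hs : 0 < s) (hs2 : s < 1 / 2) :
    (∫⁻ x in ω,
        (if Δ x = 0 then (⊤ : ENNReal) else ENNReal.ofReal (Δ x ^ (s - 1 / 2))))
      ≤ ENNReal.ofReal ((2 : ℝ) ^ (2 * (n : ℝ) * s) / ((2 : ℝ) ^ (2 * (n : ℝ) * s) - 1)) *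
        ∫⁻ x in ω \ ((2 : ℝ)⁻¹ • ω),
          (if Δ x = 0 then (⊤ : ENNReal) else ENNReal.ofReal (Δ x ^ (s - 1 / 2))) := by
  set g : (Fin n → ℝ) → ENNReal := fun x => ENNReal.ofReal (Δ x ^ (s - 1 / 2)) with hg_def
  have hsneg : s - 1 / 2 < 0 := by linarith
  -- the if-then-else integrand agrees a.e. with g
  have hae : (fun x => if Δ x = 0 then (⊤ : ENNReal) else ENNReal.ofReal (Δ x ^ (s - 1 / 2)))
      =ᵐ[volume] g := by
    filter_upwards [measure_eq_zero_iff_ae_notMem.mp hnull] with x hx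
    simp [g, hx]
  have hrw : ∀ x, Δ x ^ (s - 1 / 2)
      = (if Δ x = 0 then 0 else Real.exp (Real.log (Δ x) * (s - 1 / 2))) := by
    intro x
    by_cases h : Δ x = 0
    · rw [h, if_pos rfl, Real.zero_rpow (ne_of_lt hsneg)]
    · have hpos : 0 < Δ x := lt_of_le_of_ne (hnonneg x) (Ne.symm h)
      simp [h, Real.rpow_def_of_pos hpos]
  have hgmeas : Measurable g := by
    have h1 : Measurable fun x => (if Δ x = 0 then (0:ℝ)
        else Real.exp (Real.log (Δ x) * (s - 1 / 2))) := by
      refine Measurable.ite (hcont.measurable (measurableSet_singleton 0)) measurable_const ?_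
      exact Real.measurable_exp.comp
        ((Real.measurable_log.comp hcont.measurable).mul_const _)
    have : g = fun x => ENNReal.ofReal (if Δ x = 0 then (0:ℝ)
        else Real.exp (Real.log (Δ x) * (s - 1 / 2))) := by
      funext x; simp only [g, hrw x]
    rw [this]
    exact ENNReal.measurable_ofReal.comp h1
  have hcongr : ∀ A : Set (Fin n → ℝ),
      (∫⁻ x in A, (if Δ x = 0 then (⊤ : ENNReal) else ENNReal.ofReal (Δ x ^ (s - 1 / 2))))
        = ∫⁻ x in A, g x := fun A =>
    lintegral_congr_ae (ae_restrict_of_ae hae)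
  rw [hcongr ω, hcongr (ω \ ((2 : ℝ)⁻¹ • ω))]
  set ω' : Set (Fin n → ℝ) := ω \ ((2 : ℝ)⁻¹ • ω) with hω'
  have hω'meas : MeasurableSet ω' :=
    hopen.measurableSet.diff ((hopen.smul₀ (by norm_num : (2:ℝ)⁻¹ ≠ 0)).measurableSet)
  have hd : Module.finrank ℝ (Fin n → ℝ) = n := by
    simp [Module.finrank_fintype_fun_eq_card]
  -- scaling identity
  have hscale : ∀ c : ℝ, 0 < c →
      ∫⁻ x in c • ω', g x
        = ENNReal.ofReal (c ^ ((n : ℝ) + m * (s - 1 / 2))) * ∫⁻ x in ω', g x := by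
    intro c hc
    have hcne : c ≠ 0 := ne_of_gt hc
    have hvol : (volume : Measure (Fin n → ℝ))
        = ENNReal.ofReal (c ^ n) • Measure.map (c • ·) volume := by
      rw [Measure.map_addHaar_smul volume hcne, smul_smul, hd]
      rw [← ENNReal.ofReal_mul (by positivity)]
      rw [abs_of_nonneg (by positivity : (0:ℝ) ≤ (c ^ n)⁻¹)]
      rw [mul_inv_cancel₀ (by positivity : (c:ℝ) ^ n ≠ 0)]
      simp
    have hpre : (c • ·) ⁻¹' (c • ω') = ω' := by
      ext y
      simp only [Set.mem_preimage]
      exact Set.smul_mem_smul_set_iff₀ hcne ω' y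
    have hsmeas : MeasurableSet (c • ω') := hω'meas.const_smul₀ c
    calc ∫⁻ x in c • ω', g x
        = ∫⁻ x in c • ω', g x ∂(ENNReal.ofReal (c ^ n) • Measure.map (c • ·) volume) := by
          rw [← hvol]
      _ = ENNReal.ofReal (c ^ n) * ∫⁻ x in c • ω', g x ∂(Measure.map (c • ·) volume) := by
          rw [Measure.restrict_smul, lintegral_smul_measure, smul_eq_mul]
      _ = ENNReal.ofReal (c ^ n) * ∫⁻ y in ω', g (c • y) := by
          rw [setLIntegral_map hsmeas hgmeas (measurable_const_smul c), hpre]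
      _ = ENNReal.ofReal (c ^ n) *
            ∫⁻ y in ω', ENNReal.ofReal (c ^ (m * (s - 1 / 2))) * g y := by
          congr 1
          refine lintegral_congr fun y => ?_
          simp only [g]
          rw [hhom c hc y, ← ENNReal.ofReal_mul (by positivity)]
          congr 1
          rw [Real.mul_rpow (by positivity) (hnonneg y), ← Real.rpow_mul hc.le]
      _ = ENNReal.ofReal (c ^ ((n : ℝ) + m * (s - 1 / 2))) * ∫⁻ x in ω', g x := by
          rw [lintegral_const_mul' _ _ ENNReal.ofReal_ne_top, ← mul_assoc,
            ← ENNReal.ofReal_mul (by positivity), Real.rpow_add hc, Real.rpow_natCast]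
  -- covering of ω \ {0}
  have hΔ0 : Δ 0 = 0 := by
    have h2 := hhom 2 (by norm_num) 0
    rw [smul_zero] at h2
    have h2m : (1:ℝ) < (2:ℝ) ^ m := Real.one_lt_rpow_iff_of_pos (by norm_num) |>.mpr
      (Or.inl ⟨by norm_num, hm⟩)
    nlinarith
  have hcover : ω \ {0} ⊆ ⋃ i : ℕ, ((2 : ℝ)⁻¹ ^ i) • ω' := by
    rintro x ⟨hx, hx0⟩
    have hxne : x ≠ 0 := hx0
    have hxnorm : 0 < ‖x‖ := norm_pos_iff.mpr hxne
    obtain ⟨R, hR⟩ := hb.subset_closedBall 0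
    have hex : ∃ k : ℕ, (2 : ℝ) ^ (k + 1) • x ∉ ω := by
      obtain ⟨k, hk⟩ := pow_unbounded_of_one_lt (R / ‖x‖) (one_lt_two (α := ℝ))
      refine ⟨k, fun hmem => ?_⟩
      have := hR hmem
      rw [Metric.mem_closedBall, dist_zero_right, norm_smul] at this
      have h1 : ‖(2 : ℝ) ^ (k + 1)‖ = 2 ^ (k + 1) := by
        rw [Real.norm_eq_abs, abs_of_pos (by positivity)]
      rw [h1] at this
      have h2 : (2:ℝ) ^ k ≤ 2 ^ (k+1) := by
        apply pow_le_pow_right₀ (by norm_num); omega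
      have h3 : R / ‖x‖ < 2 ^ (k+1) := lt_of_lt_of_le hk h2
      rw [div_lt_iff₀ hxnorm] at h3
      linarith
    classical
    set i := Nat.find hex with hi
    have hspec : (2 : ℝ) ^ (i + 1) • x ∉ ω := Nat.find_spec hex
    have hmem : (2 : ℝ) ^ i • x ∈ ω := by
      rcases Nat.eq_zero_or_pos i with h | h
      · simpa [h] using hx
      · obtain ⟨j, hj⟩ := Nat.exists_eq_succ_of_ne_zero (Nat.pos_iff_ne_zero.mp h)
        have hji : j < i := by omega
        have := Nat.find_min hex hji
        rw [hj]
        simpa using not_not.mp this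
    have hnotin : (2 : ℝ) ^ i • x ∉ (2 : ℝ)⁻¹ • ω := by
      intro hmem'
      rw [Set.mem_smul_set_iff_inv_smul_mem₀ (by norm_num : (2:ℝ)⁻¹ ≠ 0)] at hmem'
      rw [inv_inv, smul_smul, ← pow_succ'] at hmem'
      exact hspec hmem'
    refine Set.mem_iUnion.mpr ⟨i, ?_⟩
    have : ((2 : ℝ)⁻¹ ^ i) • ((2 : ℝ) ^ i • x) ∈ ((2 : ℝ)⁻¹ ^ i) • ω' :=
      Set.smul_mem_smul_set ⟨hmem, hnotin⟩
    rwa [smul_smul, ← mul_pow, inv_mul_cancel₀ (by norm_num : (2:ℝ) ≠ 0), one_pow,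
      one_smul] at this
  -- abbreviations
  set I : ENNReal := ∫⁻ x in ω', g x with hI
  set r : ℝ := (2 : ℝ) ^ (-(2 * (n : ℝ) * s)) with hr
  have hnpos : (0:ℝ) < n := by exact_mod_cast hn
  have hapos : 0 < 2 * (n : ℝ) * s := by positivity
  have hrpos : 0 < r := Real.rpow_pos_of_pos (by norm_num) _
  have hrlt1 : r < 1 := Real.rpow_lt_one_of_one_lt_of_neg (by norm_num) (by linarith)
  -- term bound
  have hterm : ∀ i : ℕ, ∫⁻ x in ((2 : ℝ)⁻¹ ^ i) • ω', g x ≤ ENNReal.ofReal (r ^ i) * I := by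
    intro i
    have hcpos : (0:ℝ) < (2:ℝ)⁻¹ ^ i := by positivity
    rw [hscale _ hcpos]
    refine mul_le_mul_left (ENNReal.ofReal_le_ofReal ?_) I
    have hc1 : (2:ℝ)⁻¹ ^ i ≤ 1 := by
      apply pow_le_one₀ <;> norm_num
    have hexp : 2 * (n : ℝ) * s ≤ (n : ℝ) + m * (s - 1 / 2) := by nlinarith
    have h1 : ((2:ℝ)⁻¹ ^ i) ^ ((n : ℝ) + m * (s - 1 / 2))
        ≤ ((2:ℝ)⁻¹ ^ i) ^ (2 * (n : ℝ) * s) :=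
      Real.rpow_le_rpow_of_exponent_ge hcpos hc1 hexp
    refine h1.trans_eq ?_
    have e1 : ((2:ℝ)⁻¹ ^ i : ℝ) = (2:ℝ) ^ (-(i:ℝ)) := by
      rw [Real.rpow_neg (by norm_num : (0:ℝ) ≤ 2), Real.rpow_natCast, inv_pow]
    calc ((2:ℝ)⁻¹ ^ i) ^ (2 * (n:ℝ) * s)
        = (2:ℝ) ^ (-(i:ℝ) * (2 * (n:ℝ) * s)) := by
          rw [e1, ← Real.rpow_mul (by norm_num : (0:ℝ) ≤ 2)]
      _ = r ^ i := by
          rw [hr, ← Real.rpow_natCast ((2:ℝ) ^ (-(2 * (n:ℝ) * s))) i,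
            ← Real.rpow_mul (by norm_num : (0:ℝ) ≤ 2)]
          congr 1
          ring
  -- main chain
  have hzero : (volume : Measure (Fin n → ℝ)) {(0 : Fin n → ℝ)} = 0 := by
    refine measure_mono_null ?_ hnull
    intro x hx
    simp only [Set.mem_singleton_iff] at hx
    simp [hx, hΔ0]
  have hmain : ∫⁻ x in ω, g x ≤ (∑' i : ℕ, ENNReal.ofReal (r ^ i)) * I := by
    calc ∫⁻ x in ω, g x ≤ ∫⁻ x in (ω \ {0}) ∪ {0}, g x :=
          lintegral_mono_set (fun x hx => by
            by_cases h : x = 0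
            · exact Or.inr h
            · exact Or.inl ⟨hx, h⟩)
      _ ≤ (∫⁻ x in ω \ {0}, g x) + ∫⁻ x in ({0} : Set (Fin n → ℝ)), g x :=
          lintegral_union_le _ _ _
      _ = ∫⁻ x in ω \ {0}, g x := by
          rw [setLIntegral_measure_zero _ _ hzero, add_zero]
      _ ≤ ∫⁻ x in ⋃ i : ℕ, ((2 : ℝ)⁻¹ ^ i) • ω', g x := lintegral_mono_set hcover
      _ ≤ ∑' i : ℕ, ∫⁻ x in ((2 : ℝ)⁻¹ ^ i) • ω', g x := lintegral_iUnion_le _ _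
      _ ≤ ∑' i : ℕ, ENNReal.ofReal (r ^ i) * I := ENNReal.tsum_le_tsum hterm
      _ = (∑' i : ℕ, ENNReal.ofReal (r ^ i)) * I := by rw [ENNReal.tsum_mul_right]
  refine hmain.trans ?_
  refine mul_le_mul_left (le_of_eq ?_) I
  have h1 : ∀ i : ℕ, ENNReal.ofReal (r ^ i) = ENNReal.ofReal r ^ i := fun i =>
    ENNReal.ofReal_pow hrpos.le i
  simp_rw [h1]
  rw [ENNReal.tsum_geometric]
  have hrle1 : ENNReal.ofReal r ≤ 1 := by
    rw [← ENNReal.ofReal_one]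
    exact ENNReal.ofReal_le_ofReal hrlt1.le
  rw [← ENNReal.ofReal_one, ← ENNReal.ofReal_sub _ hrpos.le,
    ← ENNReal.ofReal_inv_of_pos (by linarith : (0:ℝ) < 1 - r)]
  congr 1
  have h2a : (0:ℝ) < (2:ℝ) ^ (2 * (n : ℝ) * s) := Real.rpow_pos_of_pos (by norm_num) _
  have h2a1 : (1:ℝ) < (2:ℝ) ^ (2 * (n : ℝ) * s) :=
    Real.one_lt_rpow_iff_of_pos (by norm_num) |>.mpr (Or.inl ⟨by norm_num, hapos⟩)
  have hrinv : r = ((2:ℝ) ^ (2 * (n : ℝ) * s))⁻¹ := by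
    rw [hr, Real.rpow_neg (by norm_num : (0:ℝ) ≤ 2)]
  rw [hrinv]
  field_simp
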